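/- arXiv:1404.4906 — 4 statements merged into one kernel-verified Lean document; each statement's English description precedes it below -/
import Mathlib

section
/- For any function x defined on integers ≥ a, any positive integer m, and any integer t ≥ a + m, the discrete Taylor formula holds: x(t) = Σ_{k=0}^{m-1} ((t-a)^((k))/k!) · Δᵏx(a) + (1/(m-1)!) · Σ_{s=a}^{t-m} (t-s-1)^((m-1)) · Δᵐx(s). -/
/-- Forward difference operator `Δx(t) = x(t+1) - x(t)`. -/
def fwdDiffZ (x : ℤ → ℝ) : ℤ → ℝ := fun t => x (t + 1) - x t

/-!
Writing `(t-s-1)^((m-1)) / (m-1)! = C(t-s-1, m-1)`, the formula is proved by induction on `m`.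
For `m = 1` it is the telescoping identity `x(t) = x(a) + Σ_{s=a}^{t-1} Δx(s)`. The step from `m`
to `m + 1` is a summation by parts in the remainder: Pascal's rule
`C(N+1, m) = C(N, m) + C(N, m-1)` shows that `C(t-s-1, m-1)` is a backward difference of
`s ↦ C(t-s, m)`, so the remainder splits off the Taylor term `C(t-a, m) Δᵐx(a)` and
leaves `Σ_s C(t-s-1, m) Δᵐ⁺¹x(s)`.
-/

open Finset fwdDiff

section

variable {M G : Type*} [AddCommMonoid M] [AddCommGroup G]

theorem sum_range_choose_smul_eq_add_sum_fwdDiff (g : ℕ → G) (n p : ℕ) :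
    ∑ j ∈ range (n + 1), (n + p - j).choose p • g j =
      (n + p + 1).choose (p + 1) • g 0 +
        ∑ j ∈ range n, (n + p - j).choose (p + 1) • Δ_[1] g j := by
  induction n generalizing g with
  | zero => simp
  | succ n ih =>
    have hshift : ∀ j, n + 1 + p - (j + 1) = n + p - j := fun j => by omega
    rw [sum_range_succ' _ n, sum_range_succ' _ (n + 1)]
    simp only [hshift]
    rw [ih (fun j => g (j + 1)), Nat.choose_succ_succ (n + 1 + p) p]
    simp only [fwdDiff, smul_sub, add_smul, Nat.sub_zero, zero_add]
    rw [show n + 1 + p = n + p + 1 by omega]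
    abel

theorem fwdDiff_one_comp_nsmul (h : M) (f : M → G) (y : M) (j : ℕ) :
    Δ_[1] (fun i : ℕ => f (y + i • h)) j = Δ_[h] f (y + j • h) := by
  simp only [fwdDiff, succ_nsmul, add_assoc]

/-- Taylor's formula with remainder for a step `h`, refining `shift_eq_sum_fwdDiff_iter`:
the order is `m = p + 1`, the endpoint `y + (n + m) • h`, and `j` indexes `s = y + j • h`. -/
theorem shift_eq_sum_fwdDiff_iter_add_sum (h : M) (f : M → G) (y : M) (n p : ℕ) :
    f (y + (n + p + 1) • h) =
      ∑ k ∈ range (p + 1), (n + p + 1).choose k • (Δ_[h])^[k] f y +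
        ∑ j ∈ range (n + 1), (n + p - j).choose p • (Δ_[h])^[p + 1] f (y + j • h) := by
  induction p generalizing n with
  | zero =>
    simp only [add_zero, zero_add, sum_range_one, Nat.choose_zero_right, one_smul,
      Function.iterate_zero_apply, Function.iterate_one]
    rw [eq_sum_range_sub (fun i : ℕ => f (y + i • h)) (n + 1), zero_smul, add_zero]
    simp only [fwdDiff, succ_nsmul, add_assoc]
  | succ p ih =>
    rw [show n + (p + 1) + 1 = n + 1 + p + 1 by ring, ih, sum_range_succ _ (p + 1),
      sum_range_choose_smul_eq_add_sum_fwdDiff]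
    simp only [fwdDiff_one_comp_nsmul, ← Function.iterate_succ_apply' (Δ_[h]), zero_smul, add_zero,
      show n + 1 + p = n + (p + 1) by omega]
    exact (add_assoc _ _ _).symm

end

theorem cast_descFactorial_div_factorial {K : Type*} [DivisionSemiring K] [CharZero K] (n k : ℕ) :
    (n.descFactorial k : K) / k.factorial = n.choose k := by
  rw [Nat.choose_eq_descFactorial_div_factorial,
    Nat.cast_div (Nat.factorial_dvd_descFactorial n k) (Nat.cast_ne_zero.2 k.factorial_ne_zero)]

/-- Discrete Taylor formula: for `x : ℤ → ℝ`, `m ≥ 1`, and `t ≥ a + m`,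
`x(t) = Σ_{k=0}^{m-1} ((t-a)^((k))/k!) Δᵏx(a)
      + (1/(m-1)!) Σ_{s=a}^{t-m} (t-s-1)^((m-1)) Δᵐx(s)`. -/
theorem discrete_taylor (x : ℤ → ℝ) (m : ℕ) (hm : 1 ≤ m) (a t : ℤ) (ht : a + m ≤ t) :
    x t =
      (∑ k ∈ Finset.range m,
        ((Nat.descFactorial (t - a).toNat k : ℝ) / (Nat.factorial k : ℝ)) *
          (fwdDiffZ^[k] x a)) +
      (1 / (Nat.factorial (m - 1) : ℝ)) *
        ∑ s ∈ Finset.Icc a (t - m),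
          ((Nat.descFactorial (t - s - 1).toNat (m - 1) : ℝ)) * (fwdDiffZ^[m] x s) := by
  obtain ⟨p, rfl⟩ : ∃ p, m = p + 1 := ⟨m - 1, by omega⟩
  obtain ⟨n, rfl⟩ : ∃ n : ℕ, t = a + (n + p + 1 : ℕ) := ⟨(t - a - (p + 1)).toNat, by omega⟩
  have htaylor := shift_eq_sum_fwdDiff_iter_add_sum (1 : ℤ) x a n p
  simp only [nsmul_eq_mul, mul_one] at htaylor
  rw [Int.Icc_eq_finset_map, sum_map, show (a + (n + p + 1 : ℕ) - a).toNat = n + p + 1 by omega,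
    show (a + (n + p + 1 : ℕ) - (p + 1 : ℕ) + 1 - a).toNat = n + 1 by omega, mul_sum]
  simp only [Nat.add_sub_cancel, cast_descFactorial_div_factorial, Function.Embedding.trans_apply,
    Nat.castEmbedding_apply, addLeftEmbedding_apply, ← mul_assoc, one_div_mul_eq_div]
  rw [show fwdDiffZ = Δ_[1] from rfl, htaylor]
  congr 1
  refine sum_congr rfl fun j hj => ?_
  rw [show (a + (n + p + 1 : ℕ) - (a + j) - 1).toNat = n + p - j by rw [mem_range] at hj; omega]
end

section
/- Let G: ℝ → ℝ and define xₙ by the explicit memory formula x_{n+1} = x₀ + p₁(n+1) - Σ_{s=0}^{n-1} (n-s)·G(x_{s+1}) for n ≥ 0. Define pₙ = x_n - x_{n-1} for n ≥ 1. Then pₙ and xₙ satisfy the 2D Universal Map recursion: p_{n+1} = pₙ - G(xₙ) and x_{n+1} = xₙ + p_{n+1} for all n ≥ 1. -/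
/-! Taking differences in `n` turns the memory kernel `n - s` into `1`: the first differences of the memory
form are `x (n + 1) - x n = p₁ - ∑_{s<n} G (x (s + 1))`, so consecutive momenta `pₙ = xₙ - xₙ₋₁`
differ by exactly the newest term `G (xₙ)`. -/

open Finset

section MemoryForm

variable {R : Type*} [CommRing R]

theorem sum_range_succ_sub_mul (g : ℕ → R) (n : ℕ) :
    ∑ s ∈ range (n + 1), (((n + 1 : ℕ) : R) - s) * g s =
      ∑ s ∈ range n, ((n : R) - s) * g s + ∑ s ∈ range (n + 1), g s := by
  calc ∑ s ∈ range (n + 1), (((n + 1 : ℕ) : R) - s) * g s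
      = ∑ s ∈ range (n + 1), (((n : R) - s) * g s + g s) := by
        refine sum_congr rfl fun s _ => ?_
        push_cast
        ring
    _ = ∑ s ∈ range n, ((n : R) - s) * g s + ∑ s ∈ range (n + 1), g s := by
        rw [sum_add_distrib, sum_range_succ (fun s => ((n : R) - s) * g s), sub_self, zero_mul,
          add_zero]

theorem sub_eq_of_memory_form {x g : ℕ → R} {c : R}
    (hx : ∀ n : ℕ, x (n + 1) = x 0 + c * ((n : R) + 1) - ∑ s ∈ range n, ((n : R) - s) * g s)
    (n : ℕ) : x (n + 1) - x n = c - ∑ s ∈ range n, g s := by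
  cases n with
  | zero => simp [hx 0]
  | succ m =>
    rw [hx (m + 1), hx m, sum_range_succ_sub_mul]
    push_cast
    ring

end MemoryForm

/-- The explicit memory (sum) form of the `α = 2` Universal Map,
`x_{n+1} = x₀ + p₁(n+1) - Σ_{s=0}^{n-1} (n-s) G(x_{s+1})`, with `pₙ = xₙ - x_{n-1}`,
satisfies the 2D Universal Map recursion `p_{n+1} = pₙ - G(xₙ)`,
`x_{n+1} = xₙ + p_{n+1}` for all `n ≥ 1`. -/
theorem universal_map_recursion_form (G : ℝ → ℝ) (x p : ℕ → ℝ) (p₁ : ℝ)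
    (hx : ∀ n : ℕ, x (n + 1) =
      x 0 + p₁ * ((n : ℝ) + 1) -
        ∑ s ∈ Finset.range n, ((n : ℝ) - (s : ℝ)) * G (x (s + 1)))
    (hp : ∀ n : ℕ, 1 ≤ n → p n = x n - x (n - 1)) :
    ∀ n : ℕ, 1 ≤ n → p (n + 1) = p n - G (x n) ∧ x (n + 1) = x n + p (n + 1) := by
  rintro n hn
  obtain ⟨m, rfl⟩ := Nat.exists_eq_add_of_le' hn
  have hp_succ : p (m + 2) = x (m + 2) - x (m + 1) := hp (m + 2) (by omega)
  have hp_self : p (m + 1) = x (m + 1) - x m := hp (m + 1) (by omega)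
  refine ⟨?_, by rw [hp_succ]; ring⟩
  rw [hp_succ, hp_self, sub_eq_of_memory_form hx, sub_eq_of_memory_form hx, sum_range_succ]
  ring
end

section
/- Semigroup-type identity for integer-order fractional sums: for positive integers m, n, any integer a, any function f on integers ≥ a, and any integer t ≥ a + m + n, applying the order-m Miller–Ross sum to the order-n Miller–Ross sum of f yields the order-(m+n) Miller–Ross sum: _aΔ^{-m}(_aΔ^{-n} f)(t) = _aΔ^{-(m+n)} f(t). -/
/-- The integer-order Miller–Ross fractional sum written with binomial kernel:
`_aΔ^{-n}_t f(t) = Σ_{s=a}^{t-n} C(t-s-1, n-1) f(s)`. -/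
noncomputable def millerRossSum (a : ℤ) (n : ℕ) (f : ℤ → ℝ) (t : ℤ) : ℝ :=
  ∑ s ∈ Finset.Icc a (t - n), (Nat.choose (t - s - 1).toNat (n - 1) : ℝ) * f s

/-!
For `n ≥ 1` the kernel `C(t - s - 1, n - 1)` is `multichoose n (t - s - n)`, the coefficient of
`x ^ (t - s - n)` in `(1 - x) ^ (-n)`. Composing two such sums convolves their kernels, so the
semigroup law is the identity `(1 - x) ^ (-m) * (1 - x) ^ (-n) = (1 - x) ^ (-(m + n))`, i.e. a
Vandermonde identity for `multichoose`; it follows from Chu–Vandermonde at negative arguments,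
since `choose (-r) k = (-1) ^ k * multichoose r k`.
-/

open Finset

theorem Ring.multichoose_add {R : Type*} [Ring R] [BinomialRing R] [NatPowAssoc R] {r s : R}
    (h : Commute r s) (k : ℕ) :
    multichoose (r + s) k = ∑ ij ∈ antidiagonal k, multichoose r ij.1 * multichoose s ij.2 := by
  rw [← smul_left_cancel_iff (Int.negOnePow (k : ℤ)), ← choose_neg', neg_add,
    add_choose_eq k h.neg_left.neg_right, smul_sum]
  refine sum_congr rfl fun ij hij => ?_
  rw [choose_neg', choose_neg', smul_mul_smul_comm, ← Int.negOnePow_add, ← Nat.cast_add,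
    mem_antidiagonal.1 hij]

theorem Nat.multichoose_add (a b k : ℕ) :
    (a + b).multichoose k = ∑ ij ∈ antidiagonal k, a.multichoose ij.1 * b.multichoose ij.2 := by
  have natCast_multichoose (n i : ℕ) : Ring.multichoose (n : ℤ) i = (n.multichoose i : ℤ) := by
    -- `BinomialRing ℤ` defines `multichoose n i` on naturals as `choose (n + i - 1) i`
    rw [Nat.multichoose_eq]; rfl
  have h := Ring.multichoose_add (Commute.all (a : ℤ) b) k
  simp only [← Nat.cast_add, natCast_multichoose] at h
  exact_mod_cast h

theorem Int.sum_Icc_eq_sum_antidiagonal {M : Type*} [AddCommMonoid M] {x y : ℤ} (h : x ≤ y)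
    (F : ℕ → ℕ → M) :
    ∑ u ∈ Icc x y, F (y - u).toNat (u - x).toNat =
      ∑ ij ∈ antidiagonal (y - x).toNat, F ij.1 ij.2 := by
  refine sum_nbij' (fun u => ((y - u).toNat, (u - x).toNat)) (fun ij => y - ij.1)
    ?_ ?_ ?_ ?_ fun _ _ => rfl <;> intro u <;>
    simp only [mem_Icc, HasAntidiagonal.mem_antidiagonal, Prod.ext_iff] <;> omega


theorem Finset.sum_Icc_mul_sum_Icc_eq_sum_antidiagonal {R : Type*} [CommSemiring R]
    (K L : ℕ → R) (f : ℤ → R) (a t : ℤ) (m n : ℕ) :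
    ∑ u ∈ Icc a (t - m), K (t - m - u).toNat * ∑ s ∈ Icc a (u - n), L (u - n - s).toNat * f s =
      ∑ s ∈ Icc a (t - m - n),
        (∑ ij ∈ antidiagonal (t - m - n - s).toNat, K ij.1 * L ij.2) * f s := by
  simp_rw [mul_sum]
  rw [sum_comm' (t' := Icc a (t - m - n)) (s' := fun s => Icc (s + n) (t - m))
    (by intro u s; simp only [mem_Icc]; omega)]
  refine sum_congr rfl fun s hs => ?_
  have hsn : s + n ≤ t - m := by rw [mem_Icc] at hs; omega
  calc ∑ u ∈ Icc (s + n) (t - m), K (t - m - u).toNat * (L (u - n - s).toNat * f s)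
      = (∑ u ∈ Icc (s + n) (t - m), K (t - m - u).toNat * L (u - (s + n)).toNat) * f s := by
        rw [sum_mul]
        refine sum_congr rfl fun u _ => ?_
        rw [mul_assoc, sub_sub u, add_comm (n : ℤ)]
    _ = _ := by
        rw [Int.sum_Icc_eq_sum_antidiagonal hsn (fun i j => K i * L j), sub_sub (t - m),
          add_comm (n : ℤ)]

theorem Nat.choose_toNat_sub_one_eq_multichoose {n : ℕ} (hn : 1 ≤ n) {d : ℤ} (hd : n ≤ d) :
    (d - 1).toNat.choose (n - 1) = n.multichoose (d - n).toNat := by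
  obtain ⟨i, rfl⟩ : ∃ i : ℕ, d = n + i := ⟨(d - n).toNat, by omega⟩
  have hd1 : (n + i - 1 : ℤ).toNat = n - 1 + i := by omega
  rw [hd1, add_sub_cancel_left, Int.toNat_natCast, Nat.multichoose_eq,
    Nat.choose_symm_add, Nat.sub_add_comm hn]

theorem millerRossSum_eq_sum_multichoose (a : ℤ) {n : ℕ} (hn : 1 ≤ n) (f : ℤ → ℝ) (t : ℤ) :
    millerRossSum a n f t = ∑ s ∈ Icc a (t - n), (n.multichoose (t - n - s).toNat : ℝ) * f s := by
  refine sum_congr rfl fun s hs => ?_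
  rw [Nat.choose_toNat_sub_one_eq_multichoose hn (by rw [mem_Icc] at hs; omega), sub_right_comm]

theorem millerRoss_semigroup_general (m n : ℕ) (hm : 1 ≤ m) (hn : 1 ≤ n) (a : ℤ)
    (f : ℤ → ℝ) (t : ℤ) :
    millerRossSum a m (fun u => millerRossSum a n f u) t =
      millerRossSum a (m + n) f t := by
  simp only [millerRossSum_eq_sum_multichoose a hm, millerRossSum_eq_sum_multichoose a hn,
    millerRossSum_eq_sum_multichoose a (Nat.le_add_right_of_le hm)]
  rw [sum_Icc_mul_sum_Icc_eq_sum_antidiagonal (fun i => (m.multichoose i : ℝ))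
    (fun j => (n.multichoose j : ℝ)), Nat.cast_add, ← sub_sub]
  refine sum_congr rfl fun s _ => ?_
  simp only [Nat.multichoose_add, Nat.cast_sum, Nat.cast_mul]

/-- Semigroup identity for integer-order Miller–Ross fractional sums:
`_aΔ^{-m}(_aΔ^{-n} f)(t) = _aΔ^{-(m+n)} f(t)` for `t ≥ a + m + n`. -/
theorem millerRoss_semigroup (m n : ℕ) (hm : 1 ≤ m) (hn : 1 ≤ n) (a : ℤ)
    (f : ℤ → ℝ) (t : ℤ) (ht : a + m + n ≤ t) :
    millerRossSum a m (fun u => millerRossSum a n f u) t =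
      millerRossSum a (m + n) f t :=
  millerRoss_semigroup_general m n hm hn a f t
end

section
/- For 1 < α < 2, define xₙ by x_{n+1} = x₀ + Δx₀·(n+1) - (K/Γ(α)) Σ_{s=0}^{n-1} (Γ(n-s+α-1)/Γ(n-s)) sin(x_{s+1}), and set pₙ = xₙ - x_{n-1} for n ≥ 1. Then pₙ satisfies pₙ = p₁ - (K/Γ(α-1)) Σ_{s=2}^{n} (Γ(n-s+α-1)/Γ(n-s+1)) sin(x_{s-1}) for all n ≥ 2, together with xₙ = x_{n-1} + pₙ. -/
/-!
Take first differences of the sum form. Both the newly added term `Γ(α) sin x_n` and the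
increments `Γ(j+α)/Γ(j+1) - Γ(j+α-1)/Γ(j) = (α-1) Γ(j+α-1)/Γ(j+1)` of the old kernel are
`α-1` times the new kernel `Γ(j+α-1)/Γ(j+1)` (the former since `Γ(α) = (α-1) Γ(α-1)`),
and `(α-1) K/Γ(α) = K/Γ(α-1)`.
-/

open Finset

theorem Real.Gamma_add_one_div_sub_Gamma_div {b c : ℝ} (hb : b ≠ 0) (hc : c ≠ 0) :
    Real.Gamma (b + 1) / Real.Gamma (c + 1) - Real.Gamma b / Real.Gamma c
      = (b - c) * (Real.Gamma b / Real.Gamma (c + 1)) := by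
  rw [Real.Gamma_add_one hb, Real.Gamma_add_one hc]
  rcases eq_or_ne (Real.Gamma c) 0 with hΓ | hΓ
  · simp [hΓ]
  · field_simp

theorem Real.Gamma_eq_sub_one_mul_Gamma_sub_one {s : ℝ} (hs : s ≠ 1) :
    Real.Gamma s = (s - 1) * Real.Gamma (s - 1) := by
  rw [← Real.Gamma_add_one (sub_ne_zero.mpr hs), sub_add_cancel]

theorem sum_range_succ_sub_sum_range_of_kernel_sub {a b : ℝ → ℝ} {c : ℝ}
    (ha₁ : a 1 = c * b 0) (hab : ∀ t : ℝ, 1 ≤ t → a (t + 1) - a t = c * b t)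
    (y : ℕ → ℝ) (m : ℕ) :
    ∑ s ∈ range (m + 1), a ((m + 1 : ℕ) - s) * y s - ∑ s ∈ range m, a ((m : ℝ) - s) * y s
      = c * ∑ s ∈ range (m + 1), b ((m : ℝ) - s) * y s := by
  rw [sum_range_succ, sum_range_succ, mul_add, mul_sum, add_sub_right_comm,
    ← sum_sub_distrib]
  congr 1
  · refine sum_congr rfl fun s hs => ?_
    have hsm : (s : ℝ) + 1 ≤ m := by exact_mod_cast mem_range.mp hs
    rw [show ((m + 1 : ℕ) : ℝ) - s = (m - s) + 1 by push_cast; ring, ← sub_mul,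
      hab _ (by linarith), mul_assoc]
  · push_cast
    rw [add_sub_cancel_left, sub_self, ha₁, mul_assoc]

theorem sum_Icc_two_eq_sum_range (f : ℝ → ℝ) (g : ℕ → ℝ) (m : ℕ) :
    ∑ s ∈ Icc 2 (m + 2), f ((m + 2 : ℕ) - s) * g (s - 1)
      = ∑ s ∈ range (m + 1), f ((m : ℝ) - s) * g (s + 1) := by
  rw [← Ico_add_one_right_eq_Icc, sum_Ico_eq_sum_range]
  refine sum_congr (by congr 1) fun s _ => ?_
  rw [show 2 + s - 1 = s + 1 by omega]
  push_cast
  ring_nf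

theorem fractional_difference_standard_momentum_form_general
    (α K x₀ Δx₀ : ℝ) (hα : 1 < α) (x p : ℕ → ℝ)
    (hx0 : x 0 = x₀)
    (hx : ∀ n : ℕ, x (n + 1) =
      x₀ + Δx₀ * ((n : ℝ) + 1) -
        K / Real.Gamma α *
          ∑ s ∈ Finset.range n,
            (Real.Gamma ((n : ℝ) - (s : ℝ) + α - 1) / Real.Gamma ((n : ℝ) - (s : ℝ))) *
              Real.sin (x (s + 1)))
    (hp : ∀ n : ℕ, 1 ≤ n → p n = x n - x (n - 1)) :
    ∀ n : ℕ, 2 ≤ n →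
      (p n = p 1 -
        K / Real.Gamma (α - 1) *
          ∑ s ∈ Finset.Icc 2 n,
            (Real.Gamma ((n : ℝ) - (s : ℝ) + α - 1) / Real.Gamma ((n : ℝ) - (s : ℝ) + 1)) *
              Real.sin (x (s - 1))) ∧
      x n = x (n - 1) + p n := by
  intro n hn
  obtain ⟨m, rfl⟩ : ∃ m, n = m + 2 := ⟨n - 2, by omega⟩
  have hpm : p (m + 2) = x (m + 2) - x (m + 1) := hp (m + 2) (by omega)
  refine ⟨?_, by simp [hpm]⟩
  have hp1 : p 1 = Δx₀ := by simp [hp 1 le_rfl, hx 0, hx0]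
  have hΓα := Real.Gamma_eq_sub_one_mul_Gamma_sub_one hα.ne'
  have hcoef : K / Real.Gamma α * (α - 1) = K / Real.Gamma (α - 1) := by
    have hΓ := (Real.Gamma_pos_of_pos (sub_pos.mpr hα)).ne'
    rw [hΓα]
    field_simp [sub_ne_zero.mpr hα.ne']
  have hkernel := sum_range_succ_sub_sum_range_of_kernel_sub
    (a := fun t => Real.Gamma (t + α - 1) / Real.Gamma t)
    (b := fun t => Real.Gamma (t + α - 1) / Real.Gamma (t + 1)) (c := α - 1)
    (by simpa using hΓα) (fun t ht => by
      have h := Real.Gamma_add_one_div_sub_Gamma_div (b := t + α - 1) (c := t)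
        (by linarith) (by linarith)
      rwa [show t + α - 1 - t = α - 1 by ring, show t + α - 1 + 1 = t + 1 + α - 1 by ring] at h)
    (fun s => Real.sin (x (s + 1))) m
  rw [hpm, hp1, hx (m + 1), hx m, sum_Icc_two_eq_sum_range
    (fun t => Real.Gamma (t + α - 1) / Real.Gamma (t + 1)) (fun s => Real.sin (x s)) m,
    ← hcoef]
  beta_reduce at hkernel ⊢
  push_cast at hkernel ⊢
  linear_combination (-(K / Real.Gamma α)) * hkernel

/-- For `1 < α < 2`, the explicit sum form of the fractional difference Caputo
Standard α-family of maps,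
`x_{n+1} = x₀ + Δx₀(n+1) - (K/Γ(α)) Σ_{s=0}^{n-1} (Γ(n-s+α-1)/Γ(n-s)) sin(x_{s+1})`,
with momentum `pₙ = xₙ - x_{n-1}`, yields the 2D momentum form
`pₙ = p₁ - (K/Γ(α-1)) Σ_{s=2}^{n} (Γ(n-s+α-1)/Γ(n-s+1)) sin(x_{s-1})` together
with `xₙ = x_{n-1} + pₙ`, for all `n ≥ 2`. -/
theorem fractional_difference_standard_momentum_form
    (α K x₀ Δx₀ : ℝ) (hα : 1 < α) (hα2 : α < 2) (x p : ℕ → ℝ)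
    (hx0 : x 0 = x₀)
    (hx : ∀ n : ℕ, x (n + 1) =
      x₀ + Δx₀ * ((n : ℝ) + 1) -
        K / Real.Gamma α *
          ∑ s ∈ Finset.range n,
            (Real.Gamma ((n : ℝ) - (s : ℝ) + α - 1) / Real.Gamma ((n : ℝ) - (s : ℝ))) *
              Real.sin (x (s + 1)))
    (hp : ∀ n : ℕ, 1 ≤ n → p n = x n - x (n - 1)) :
    ∀ n : ℕ, 2 ≤ n →
      (p n = p 1 -
        K / Real.Gamma (α - 1) *
          ∑ s ∈ Finset.Icc 2 n,
            (Real.Gamma ((n : ℝ) - (s : ℝ) + α - 1) / Real.Gamma ((n : ℝ) - (s : ℝ) + 1)) *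
              Real.sin (x (s - 1))) ∧
      x n = x (n - 1) + p n :=
  fractional_difference_standard_momentum_form_general α K x₀ Δx₀ hα x p hx0 hx hp
end
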